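/- Let G be a linear influence game with n players in which all weights are nonnegative: w_{ji} ≥ 0 for all distinct j, i. Define the synchronous best-response map T : {−1,1}^n → {−1,1}^n by T(x)_i = 1 if Σ_{j≠i} w_{ji} x_j − b_i ≥ 0 and T(x)_i = −1 otherwise. Then the iterates T^k(𝟙) starting from the all-ones joint action 𝟙 are componentwise nonincreasing in k; T^n(𝟙) is a fixed point of T; and T^n(𝟙) is a pure-strategy Nash equilibrium of G. In particular, every LIG with nonnegative weights has at least one pure-strategy Nash equilibrium. -/

import Mathlib

/-!
With nonnegative weights the synchronous best response `T` is monotone for the componentwise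
order, and `T 𝟙 ≤ 𝟙`, so the iterates `T^[k] 𝟙` decrease. Each strict decrease switches at
least one player from `1` to `-1`, which can happen at most `n` times; hence `T^[n] 𝟙` is a
fixed point of `T`, and a fixed point of the best response is a pure-strategy Nash equilibrium.
-/

open Finset Function

theorem Nat.exists_le_apply_le_apply_succ {m : ℕ → ℕ} {N : ℕ} (hm : m 0 ≤ N) :
    ∃ k ≤ N, m k ≤ m (k + 1) := by
  by_contra! h
  have hdecay : ∀ k ≤ N + 1, m k + k ≤ N := by
    intro k hk
    induction k with
    | zero => simpa using hm
    | succ k ih =>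
      have := h k (by omega)
      have := ih (by omega)
      omega
  have := hdecay (N + 1) le_rfl
  omega

theorem Monotone.isFixedPt_iterate_of_map_le {α : Type*} [PartialOrder α] {f : α → α}
    (hf : Monotone f) {x : α} (hx : f x ≤ x) {s : Set α} (hs : ∀ k, f^[k] x ∈ s)
    {g : α → ℕ} (hg : StrictMonoOn g s) {N : ℕ} (hN : g x ≤ N) :
    IsFixedPt f (f^[N] x) := by
  obtain ⟨k, hkN, hk⟩ := Nat.exists_le_apply_le_apply_succ (m := fun k => g (f^[k] x)) hN
  have hstep : f^[k + 1] x = f^[k] x := by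
    by_contra hne
    exact hk.not_gt <| hg (hs _) (hs _) <|
      lt_of_le_of_ne (hf.antitone_iterate_of_map_le hx k.le_succ) hne
  have hfix : IsFixedPt f (f^[k] x) := by
    rwa [IsFixedPt, ← iterate_succ_apply' f k x]
  rw [← Nat.sub_add_cancel hkN, iterate_add_apply, iterate_fixed hfix]
  exact hfix

section SignVector

variable {ι : Type*} [Fintype ι]

def signVectors (ι : Type*) : Set (ι → ℝ) := {x | ∀ i, x i = 1 ∨ x i = -1}

theorem card_filter_eq_one_strictMonoOn :
    StrictMonoOn (fun x : ι → ℝ => #(univ.filter (x · = 1))) (signVectors ι) := by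
  intro x hx y hy hxy
  apply card_lt_card
  refine ⟨monotone_filter_right _ fun i _ hxi => ?_, fun hsub => hxy.not_ge fun i => ?_⟩
  · rcases hy i with h | h
    · exact h
    · linarith [hxy.le i]
  · rcases hy i with h | h
    · rw [h, (mem_filter.1 (hsub (mem_filter.2 ⟨mem_univ i, h⟩))).2]
    · rcases hx i with h' | h' <;> linarith

end SignVector

section LinearInfluenceGame

variable {ι : Type*} [Fintype ι] [DecidableEq ι] (w : ι → ι → ℝ) (b : ι → ℝ)

noncomputable def influence (x : ι → ℝ) (i : ι) : ℝ :=
  (∑ j ∈ univ.filter (· ≠ i), w j i * x j) - b i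

noncomputable def bestResponse (x : ι → ℝ) (i : ι) : ℝ :=
  if 0 ≤ influence w b x i then 1 else -1

theorem bestResponse_mem_signVectors (x : ι → ℝ) : bestResponse w b x ∈ signVectors ι := by
  intro i
  unfold bestResponse
  split_ifs <;> simp

theorem bestResponse_le_one (x : ι → ℝ) : bestResponse w b x ≤ fun _ => 1 := by
  intro i
  unfold bestResponse
  split_ifs <;> norm_num

theorem iterate_bestResponse_mem_signVectors (k : ℕ) :
    (bestResponse w b)^[k] (fun _ => 1) ∈ signVectors ι := by
  cases k with
  | zero => exact fun _ => Or.inl rfl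
  | succ k =>
    rw [iterate_succ_apply']
    exact bestResponse_mem_signVectors w b _

variable {w}

theorem influence_mono (hw : ∀ j i : ι, j ≠ i → 0 ≤ w j i) (i : ι) :
    Monotone fun x => influence w b x i := by
  intro x y hxy
  refine sub_le_sub_right (sum_le_sum fun j hj => ?_) _
  exact mul_le_mul_of_nonneg_left (hxy j) (hw j i (mem_filter.1 hj).2)

theorem bestResponse_mono (hw : ∀ j i : ι, j ≠ i → 0 ≤ w j i) :
    Monotone (bestResponse w b) := by
  intro x y hxy i
  have : influence w b x i ≤ influence w b y i := influence_mono b hw i hxy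
  unfold bestResponse
  split_ifs <;> first | rfl | linarith

theorem mul_influence_nonneg_of_isFixedPt {x : ι → ℝ} (hx : IsFixedPt (bestResponse w b) x)
    (i : ι) : 0 ≤ x i * influence w b x i := by
  have hi : bestResponse w b x i = x i := congrFun hx i
  unfold bestResponse at hi
  split_ifs at hi with h
  · rw [← hi, one_mul]
    exact h
  · rw [← hi]
    linarith

end LinearInfluenceGame

theorem nonneg_lig_best_response_dynamics (n : ℕ)
    (w : Fin n → Fin n → ℝ) (b : Fin n → ℝ)
    (hw : ∀ j i : Fin n, j ≠ i → 0 ≤ w j i) :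
    let T : (Fin n → ℝ) → (Fin n → ℝ) := fun x i =>
      if 0 ≤ (∑ j ∈ univ.filter (· ≠ i), w j i * x j) - b i then 1 else -1
    let one : Fin n → ℝ := fun _ => 1
    (∀ k : ℕ, ∀ i : Fin n, T^[k + 1] one i ≤ T^[k] one i) ∧
    T (T^[n] one) = T^[n] one ∧
    (∀ i : Fin n,
        T^[n] one i * ((∑ j ∈ univ.filter (· ≠ i), w j i * T^[n] one j) - b i) ≥ 0) ∧
    (∃ x : Fin n → ℝ, (∀ i, x i = 1 ∨ x i = -1) ∧
        ∀ i, x i * ((∑ j ∈ univ.filter (· ≠ i), w j i * x j) - b i) ≥ 0) := by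
  change let T := bestResponse w b; let one : Fin n → ℝ := fun _ => 1; _
  intro T one
  have hmono : Monotone T := bestResponse_mono b hw
  have hle : T one ≤ one := bestResponse_le_one w b one
  have hfix : IsFixedPt T (T^[n] one) :=
    hmono.isFixedPt_iterate_of_map_le hle (iterate_bestResponse_mem_signVectors w b)
      card_filter_eq_one_strictMonoOn (by simpa using card_le_univ (univ.filter (one · = 1)))
  have hnash := mul_influence_nonneg_of_isFixedPt b hfix
  exact ⟨fun k => hmono.antitone_iterate_of_map_le hle k.le_succ, hfix, hnash,
    _, iterate_bestResponse_mem_signVectors w b n, hnash⟩
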